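/- arXiv:2302.05827 — 4 statements merged into one kernel-verified Lean document; each statement's English description precedes it below -/
import Mathlib

section
/- Let n ≥ 1 and t⁰ ∈ ℝ. Let H: ℝ × ℝⁿ → ℝ be smooth with H(t,0) = 0 and with vanishing x-derivative D_x H(t,0) = 0 for every t ∈ ℝ. For each t let M(t) be the n×n symmetric matrix with entries M(t)_{ij} = (1/2) ∂²H/∂x_i∂x_j(t,0). Assume: (i) there is λ > 0 such that vᵀ M(t) v > λ‖v‖² for every t ≥ t⁰ and every v ∈ ℝⁿ∖{0}; (ii) there are c ∈ ℝ and r₀ > 0 such that |∂³H/∂x_i∂x_j∂x_k(t,y)| ≤ 6c for all t ≥ t⁰, all y with ‖y‖ ≤ r₀, and all indices i,j,k. Then there exist r ∈ (0, r₀] and a continuous strictly increasing function α: [0,∞) → ℝ with α(0) = 0 such that H(t,x) ≥ α(‖x‖) for every t ≥ t⁰ and every x ∈ ℝⁿ with ‖x‖ < r; that is, H is a locally positive definite function at 0 from t⁰. -/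
open scoped BigOperators

/-- First partial derivative of `f` at `x` in the `i`-th coordinate direction. -/
noncomputable def pd {m : ℕ} (f : EuclideanSpace ℝ (Fin m) → ℝ)
    (x : EuclideanSpace ℝ (Fin m)) (i : Fin m) : ℝ :=
  fderiv ℝ f x (EuclideanSpace.single i 1)

/-- Second partial derivative. -/
noncomputable def pd2 {m : ℕ} (f : EuclideanSpace ℝ (Fin m) → ℝ)
    (x : EuclideanSpace ℝ (Fin m)) (i j : Fin m) : ℝ :=
  pd (fun y => pd f y j) x i

/-- Third partial derivative. -/
noncomputable def pd3 {m : ℕ} (f : EuclideanSpace ℝ (Fin m) → ℝ)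
    (x : EuclideanSpace ℝ (Fin m)) (i j k : Fin m) : ℝ :=
  pd (fun y => pd2 f y j k) x i

lemma my_sum_single {n : ℕ} (x : EuclideanSpace ℝ (Fin n)) :
    ∑ i, x i • EuclideanSpace.single i (1:ℝ) = x := by
  simpa using (EuclideanSpace.basisFun (Fin n) ℝ).sum_repr x

lemma my_coord_le {n : ℕ} (x : EuclideanSpace ℝ (Fin n)) (i : Fin n) : |x i| ≤ ‖x‖ := by
  rw [EuclideanSpace.norm_eq]
  have h1 : ‖x i‖ ^ 2 ≤ ∑ j, ‖x j‖ ^ 2 :=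
    Finset.single_le_sum (f := fun j => ‖x j‖ ^ 2) (fun j _ => sq_nonneg _) (Finset.mem_univ i)
  calc |x i| = Real.sqrt (‖x i‖ ^ 2) := by
        rw [Real.sqrt_sq (norm_nonneg _), Real.norm_eq_abs]
    _ ≤ _ := Real.sqrt_le_sqrt h1

lemma clm_expand {n : ℕ} {F : Type*} [NormedAddCommGroup F] [NormedSpace ℝ F]
    (T : EuclideanSpace ℝ (Fin n) →L[ℝ] F) (x : EuclideanSpace ℝ (Fin n)) :
    T x = ∑ i, x i • T (EuclideanSpace.single i 1) := by
  conv_lhs => rw [← my_sum_single x]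
  rw [map_sum]
  exact Finset.sum_congr rfl fun i _ => by rw [map_smul]

lemma bilin_expand {n : ℕ}
    (L : EuclideanSpace ℝ (Fin n) →L[ℝ] (EuclideanSpace ℝ (Fin n) →L[ℝ] ℝ))
    (x : EuclideanSpace ℝ (Fin n)) :
    L x x = ∑ i, ∑ j, x i * x j *
      L (EuclideanSpace.single i 1) (EuclideanSpace.single j 1) := by
  rw [clm_expand L x, ContinuousLinearMap.sum_apply]
  refine Finset.sum_congr rfl fun i _ => ?_
  rw [ContinuousLinearMap.smul_apply, clm_expand (L (EuclideanSpace.single i 1)) x,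
    Finset.smul_sum]
  refine Finset.sum_congr rfl fun j _ => ?_
  simp only [smul_eq_mul]; ring

lemma trilin_expand {n : ℕ}
    (L : EuclideanSpace ℝ (Fin n) →L[ℝ]
      (EuclideanSpace ℝ (Fin n) →L[ℝ] (EuclideanSpace ℝ (Fin n) →L[ℝ] ℝ)))
    (x : EuclideanSpace ℝ (Fin n)) :
    L x x x = ∑ i, ∑ j, ∑ k, x i * x j * x k *
      L (EuclideanSpace.single i 1) (EuclideanSpace.single j 1)
        (EuclideanSpace.single k 1) := by
  have h0 : L x = ∑ i, x i • L (EuclideanSpace.single i 1) :=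
    clm_expand (F := EuclideanSpace ℝ (Fin n) →L[ℝ] (EuclideanSpace ℝ (Fin n) →L[ℝ] ℝ)) L x
  rw [h0, ContinuousLinearMap.sum_apply, ContinuousLinearMap.sum_apply]
  refine Finset.sum_congr rfl fun i _ => ?_
  rw [ContinuousLinearMap.smul_apply, ContinuousLinearMap.smul_apply, smul_eq_mul,
    bilin_expand (L (EuclideanSpace.single i 1)) x, Finset.mul_sum]
  refine Finset.sum_congr rfl fun j _ => ?_
  rw [Finset.mul_sum]
  refine Finset.sum_congr rfl fun k _ => ?_
  ring

lemma pd2_eq {n : ℕ} (f : EuclideanSpace ℝ (Fin n) → ℝ) (hf : ContDiff ℝ (⊤ : ℕ∞) f)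
    (y : EuclideanSpace ℝ (Fin n)) (i j : Fin n) :
    pd2 f y i j = fderiv ℝ (fderiv ℝ f) y (EuclideanSpace.single i 1)
      (EuclideanSpace.single j 1) := by
  have hd : DifferentiableAt ℝ (fderiv ℝ f) y :=
    ((hf.fderiv_right (m := (⊤ : ℕ∞)) (by simp)).differentiable (by simp)) y
  unfold pd2 pd
  rw [fderiv_clm_apply hd (differentiableAt_const _)]
  simp

lemma pd3_eq {n : ℕ} (f : EuclideanSpace ℝ (Fin n) → ℝ) (hf : ContDiff ℝ (⊤ : ℕ∞) f)
    (y : EuclideanSpace ℝ (Fin n)) (i j k : Fin n) :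
    pd3 f y i j k = fderiv ℝ (fderiv ℝ (fderiv ℝ f)) y (EuclideanSpace.single i 1)
      (EuclideanSpace.single j 1) (EuclideanSpace.single k 1) := by
  have hD2d : Differentiable ℝ (fderiv ℝ (fderiv ℝ f)) :=
    ((hf.fderiv_right (m := (⊤ : ℕ∞)) (by simp)).fderiv_right (m := (⊤ : ℕ∞)) (by simp)).differentiable (by simp)
  unfold pd3 pd
  have h2 : (fun z => pd2 f z j k)
      = fun z => fderiv ℝ (fderiv ℝ f) z (EuclideanSpace.single j 1)
          (EuclideanSpace.single k 1) :=
    funext fun z => pd2_eq f hf z j k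
  rw [h2]
  have hcj : DifferentiableAt ℝ
      (fun z => fderiv ℝ (fderiv ℝ f) z (EuclideanSpace.single j 1)) y :=
    (hD2d y).clm_apply (differentiableAt_const _)
  rw [fderiv_clm_apply hcj (differentiableAt_const _),
    fderiv_clm_apply (hD2d y) (differentiableAt_const _)]
  simp

lemma key_taylor {n : ℕ} (f : EuclideanSpace ℝ (Fin n) → ℝ) (hf : ContDiff ℝ (⊤ : ℕ∞) f)
    (hf0 : f 0 = 0) (hd0 : fderiv ℝ f 0 = 0) (K : ℝ)
    (x : EuclideanSpace ℝ (Fin n))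
    (hbound : ∀ s : ℝ, s ∈ Set.Icc (0:ℝ) 1 →
      |fderiv ℝ (fderiv ℝ (fderiv ℝ f)) (s • x) x x x| ≤ K) :
    (1/2) * fderiv ℝ (fderiv ℝ f) 0 x x - K/6 ≤ f x := by
  have hfd : Differentiable ℝ f := hf.differentiable (by simp)
  have hD1c : ContDiff ℝ (⊤ : ℕ∞) (fderiv ℝ f) := hf.fderiv_right (by simp)
  have hD1d : Differentiable ℝ (fderiv ℝ f) := hD1c.differentiable (by simp)
  have hD2c : ContDiff ℝ (⊤ : ℕ∞) (fderiv ℝ (fderiv ℝ f)) := hD1c.fderiv_right (by simp)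
  have hD2d : Differentiable ℝ (fderiv ℝ (fderiv ℝ f)) := hD2c.differentiable (by simp)
  have hline : ∀ s : ℝ, HasDerivAt (fun u : ℝ => u • x) x s := fun s => by
    simpa using (hasDerivAt_id s).smul_const x
  have hg : ∀ s, HasDerivAt (fun u : ℝ => f (u • x)) (fderiv ℝ f (s • x) x) s := fun s =>
    (hfd (s • x)).hasFDerivAt.comp_hasDerivAt s (hline s)
  have hg1 : ∀ s, HasDerivAt (fun u : ℝ => fderiv ℝ f (u • x) x)
      (fderiv ℝ (fderiv ℝ f) (s • x) x x) s := fun s => by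
    have h1 : HasFDerivAt (fun y => fderiv ℝ f y x)
        ((ContinuousLinearMap.apply ℝ ℝ x).comp (fderiv ℝ (fderiv ℝ f) (s • x))) (s • x) :=
      (ContinuousLinearMap.apply ℝ ℝ x).hasFDerivAt.comp (s • x) (hD1d (s • x)).hasFDerivAt
    exact h1.comp_hasDerivAt s (hline s)
  have hg2 : ∀ s, HasDerivAt (fun u : ℝ => fderiv ℝ (fderiv ℝ f) (u • x) x x)
      (fderiv ℝ (fderiv ℝ (fderiv ℝ f)) (s • x) x x x) s := fun s => by
    have hc2 := (hD2d (s • x)).hasFDerivAt.clm_apply (hasFDerivAt_const x (s • x))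
    have hc3 := hc2.clm_apply (hasFDerivAt_const x (s • x))
    have h := hc3.comp_hasDerivAt s (hline s)
    exact h.congr_deriv (by simp)
  have hmono : ∀ (φ ψ : ℝ → ℝ), (∀ s, HasDerivAt φ (ψ s) s) →
      (∀ s ∈ Set.Ioo (0:ℝ) 1, 0 ≤ ψ s) → MonotoneOn φ (Set.Icc 0 1) := by
    intro φ ψ hφ hψ
    apply monotoneOn_of_deriv_nonneg (convex_Icc 0 1)
    · exact fun s _ => (hφ s).continuousAt.continuousWithinAt
    · exact fun s _ => (hφ s).differentiableAt.differentiableWithinAt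
    · intro s hs
      rw [interior_Icc] at hs
      rw [(hφ s).deriv]
      exact hψ s hs
  have hKnn : 0 ≤ K := le_trans (abs_nonneg _) (hbound 0 ⟨le_refl 0, zero_le_one⟩)
  -- step 1 : the second derivative along the line does not decrease too fast
  have hstep1 : ∀ s ∈ Set.Icc (0:ℝ) 1,
      fderiv ℝ (fderiv ℝ f) 0 x x ≤ fderiv ℝ (fderiv ℝ f) (s • x) x x + K * s := by
    have hm : MonotoneOn (fun s => fderiv ℝ (fderiv ℝ f) (s • x) x x + K * s)
        (Set.Icc 0 1) := by
      refine hmono _ (fun s => fderiv ℝ (fderiv ℝ (fderiv ℝ f)) (s • x) x x x + K)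
        (fun s => ((hg2 s).add ((hasDerivAt_id s).const_mul K)).congr_deriv (by ring)) ?_
      intro s hs
      have hb := hbound s ⟨hs.1.le, hs.2.le⟩
      have := neg_abs_le (fderiv ℝ (fderiv ℝ (fderiv ℝ f)) (s • x) x x x)
      linarith
    intro s hs
    have h0 : (0:ℝ) ∈ Set.Icc (0:ℝ) 1 := ⟨le_refl 0, zero_le_one⟩
    have := hm h0 hs hs.1
    simpa using this
  -- step 2 : first derivative along the line is nonnegative after correction
  have hstep2 : ∀ s ∈ Set.Icc (0:ℝ) 1,
      0 ≤ fderiv ℝ f (s • x) x - fderiv ℝ (fderiv ℝ f) 0 x x * s + K/2 * s^2 := by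
    have hm : MonotoneOn
        (fun s => fderiv ℝ f (s • x) x - fderiv ℝ (fderiv ℝ f) 0 x x * s + K/2 * s^2)
        (Set.Icc 0 1) := by
      refine hmono _
        (fun s => fderiv ℝ (fderiv ℝ f) (s • x) x x
          - fderiv ℝ (fderiv ℝ f) 0 x x + K * s) (fun s => ?_) ?_
      · have h := ((hg1 s).sub ((hasDerivAt_id s).const_mul
          (fderiv ℝ (fderiv ℝ f) 0 x x))).add
          (HasDerivAt.const_mul (K/2) (hasDerivAt_pow 2 s))
        refine h.congr_deriv ?_
        push_cast
        ring
      · intro s hs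
        have := hstep1 s ⟨hs.1.le, hs.2.le⟩
        linarith
    intro s hs
    have h0 : (0:ℝ) ∈ Set.Icc (0:ℝ) 1 := ⟨le_refl 0, zero_le_one⟩
    have hv0 : (fun s => fderiv ℝ f (s • x) x - fderiv ℝ (fderiv ℝ f) 0 x x * s
        + K/2 * s^2) 0 = 0 := by
      simp [hd0]
    have := hm h0 hs hs.1
    rw [hv0] at this
    exact this
  -- step 3 : conclude
  have hm : MonotoneOn
      (fun s => f (s • x) - fderiv ℝ (fderiv ℝ f) 0 x x / 2 * s^2 + K/6 * s^3)
      (Set.Icc 0 1) := by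
    refine hmono _
      (fun s => fderiv ℝ f (s • x) x - fderiv ℝ (fderiv ℝ f) 0 x x * s + K/2 * s^2)
      (fun s => ?_) (fun s hs => hstep2 s ⟨hs.1.le, hs.2.le⟩)
    have h := ((hg s).sub (HasDerivAt.const_mul
      (fderiv ℝ (fderiv ℝ f) 0 x x / 2) (hasDerivAt_pow 2 s))).add
      (HasDerivAt.const_mul (K/6) (hasDerivAt_pow 3 s))
    refine h.congr_deriv ?_
    push_cast
    ring
  have h0 : (0:ℝ) ∈ Set.Icc (0:ℝ) 1 := ⟨le_refl 0, zero_le_one⟩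
  have h1 : (1:ℝ) ∈ Set.Icc (0:ℝ) 1 := ⟨zero_le_one, le_refl 1⟩
  have := hm h0 h1 zero_le_one
  simp only [zero_smul, one_smul, hf0] at this
  norm_num at this
  linarith

/-- Coordinate form of Lemma 8.1 (lpdf part): a smooth time-dependent function with an
equilibrium at `0`, uniformly positive-definite Hessian at `0` and uniformly bounded third
derivatives near `0`, is locally positive definite at `0` from `t0`. -/
theorem lpdf_of_hessian_bounds
    (n : ℕ) (hn : 1 ≤ n) (t0 : ℝ)
    (H : ℝ × EuclideanSpace ℝ (Fin n) → ℝ) (hH : ContDiff ℝ (⊤ : ℕ∞) H)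
    (hzero : ∀ t : ℝ, H (t, 0) = 0)
    (hcrit : ∀ t : ℝ, fderiv ℝ (fun x => H (t, x)) 0 = 0)
    (M : ℝ → Matrix (Fin n) (Fin n) ℝ)
    (hM : ∀ t i j, M t i j = (1 / 2) * pd2 (fun x => H (t, x)) 0 i j)
    (lam : ℝ) (hlam : 0 < lam)
    (hlow : ∀ t ≥ t0, ∀ v : EuclideanSpace ℝ (Fin n), v ≠ 0 →
      lam * ‖v‖ ^ 2 < ∑ i, ∑ j, v i * M t i j * v j)
    (c r0 : ℝ) (hr0 : 0 < r0)
    (h3 : ∀ t ≥ t0, ∀ y : EuclideanSpace ℝ (Fin n), ‖y‖ ≤ r0 → ∀ i j k,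
      |pd3 (fun x => H (t, x)) y i j k| ≤ 6 * c) :
    ∃ r : ℝ, 0 < r ∧ r ≤ r0 ∧ ∃ α : ℝ → ℝ, ContinuousOn α (Set.Ici 0) ∧
      StrictMonoOn α (Set.Ici 0) ∧ α 0 = 0 ∧
      ∀ t ≥ t0, ∀ x : EuclideanSpace ℝ (Fin n), ‖x‖ < r → α ‖x‖ ≤ H (t, x) := by
  have i0 : Fin n := ⟨0, hn⟩
  have hc0 : 0 ≤ c := by
    have h := h3 t0 le_rfl 0 (by simp [hr0.le]) i0 i0 i0
    have h2 := abs_nonneg (pd3 (fun x => H (t0, x)) 0 i0 i0 i0)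
    linarith
  have hden : 0 < 2 * (c * (n:ℝ)^3 + 1) := by positivity
  refine ⟨min r0 (lam / (2 * (c * (n:ℝ)^3 + 1))),
    lt_min hr0 (div_pos hlam hden), min_le_left _ _,
    fun s => lam/2 * s^2, (continuous_const.mul (continuous_pow 2)).continuousOn,
    ?_, by norm_num, ?_⟩
  · intro a ha b hb hab
    have ha' : (0:ℝ) ≤ a := ha
    dsimp only
    exact mul_lt_mul_of_pos_left (pow_lt_pow_left₀ hab ha' (by norm_num)) (by linarith)
  · intro t ht x hxr
    show lam/2 * ‖x‖^2 ≤ H (t, x)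
    by_cases hx0 : x = 0
    · rw [hx0]
      simp [hzero t]
    have hf : ContDiff ℝ (⊤ : ℕ∞) (fun x => H (t, x)) := hH.comp (contDiff_const.prodMk contDiff_id)
    have hxr0 : ‖x‖ ≤ r0 := le_trans hxr.le (min_le_left _ _)
    have hbound : ∀ s : ℝ, s ∈ Set.Icc (0:ℝ) 1 →
        |fderiv ℝ (fderiv ℝ (fderiv ℝ (fun x => H (t, x)))) (s • x) x x x|
          ≤ 6 * c * (n:ℝ)^3 * ‖x‖^3 := by
      intro s hs
      have hys : ‖s • x‖ ≤ r0 := by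
        rw [norm_smul]
        have h1 : ‖s‖ ≤ 1 := by rw [Real.norm_eq_abs, abs_of_nonneg hs.1]; exact hs.2
        calc ‖s‖ * ‖x‖ ≤ 1 * ‖x‖ := mul_le_mul_of_nonneg_right h1 (norm_nonneg x)
          _ ≤ r0 := by rw [one_mul]; exact hxr0
      rw [trilin_expand (fderiv ℝ (fderiv ℝ (fderiv ℝ (fun x => H (t, x)))) (s • x)) x]
      have hterm : ∀ i j k : Fin n,
          |x i * x j * x k * fderiv ℝ (fderiv ℝ (fderiv ℝ (fun x => H (t, x)))) (s • x)
            (EuclideanSpace.single i 1) (EuclideanSpace.single j 1)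
            (EuclideanSpace.single k 1)| ≤ ‖x‖^3 * (6 * c) := by
        intro i j k
        have hT : |fderiv ℝ (fderiv ℝ (fderiv ℝ (fun x => H (t, x)))) (s • x)
            (EuclideanSpace.single i 1) (EuclideanSpace.single j 1)
            (EuclideanSpace.single k 1)| ≤ 6 * c := by
          rw [← pd3_eq (fun x => H (t, x)) hf (s • x) i j k]
          exact h3 t ht (s • x) hys i j k
        rw [abs_mul, abs_mul, abs_mul]
        have e1 : ‖x‖^3 * (6 * c) = ‖x‖ * ‖x‖ * ‖x‖ * (6 * c) := by ring
        rw [e1]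
        gcongr <;> first
          | exact my_coord_le x i
          | exact my_coord_le x j
          | exact my_coord_le x k
          | exact hT
      calc |∑ i, ∑ j, ∑ k, x i * x j * x k *
            fderiv ℝ (fderiv ℝ (fderiv ℝ (fun x => H (t, x)))) (s • x)
            (EuclideanSpace.single i 1) (EuclideanSpace.single j 1)
            (EuclideanSpace.single k 1)|
          ≤ ∑ i, ∑ j, ∑ k : Fin n, ‖x‖^3 * (6 * c) := by
            refine le_trans (Finset.abs_sum_le_sum_abs _ _) (Finset.sum_le_sum fun i _ => ?_)
            refine le_trans (Finset.abs_sum_le_sum_abs _ _) (Finset.sum_le_sum fun j _ => ?_)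
            refine le_trans (Finset.abs_sum_le_sum_abs _ _) (Finset.sum_le_sum fun k _ => ?_)
            exact hterm i j k
        _ = 6 * c * (n:ℝ)^3 * ‖x‖^3 := by
            simp [Finset.sum_const, Finset.card_univ]
            ring
    have hkey : 1/2 * fderiv ℝ (fderiv ℝ (fun x => H (t, x))) 0 x x
        - (6 * c * (n:ℝ)^3 * ‖x‖^3)/6 ≤ H (t, x) :=
      key_taylor (fun x => H (t, x)) hf (hzero t) (hcrit t)
        (6 * c * (n:ℝ)^3 * ‖x‖^3) x hbound
    have hQ : lam * ‖x‖^2 ≤ 1/2 * fderiv ℝ (fderiv ℝ (fun x => H (t, x))) 0 x x := by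
      have hl := hlow t ht x hx0
      have he : ∑ i, ∑ j, x i * M t i j * x j
          = 1/2 * fderiv ℝ (fderiv ℝ (fun x => H (t, x))) 0 x x := by
        rw [bilin_expand (fderiv ℝ (fderiv ℝ (fun x => H (t, x))) 0) x, Finset.mul_sum]
        refine Finset.sum_congr rfl fun i _ => ?_
        rw [Finset.mul_sum]
        refine Finset.sum_congr rfl fun j _ => ?_
        rw [hM t i j, pd2_eq (fun x => H (t, x)) hf 0 i j]
        ring
      rw [he] at hl
      exact hl.le
    have hxr2 : ‖x‖ < lam / (2 * (c * (n:ℝ)^3 + 1)) :=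
      lt_of_lt_of_le hxr (min_le_right _ _)
    have hsmall : c * (n:ℝ)^3 * ‖x‖ < lam/2 := by
      have h1 := (lt_div_iff₀ hden).mp hxr2
      nlinarith [norm_nonneg x, hc0]
    nlinarith [hkey, hQ, hsmall, sq_nonneg ‖x‖, norm_nonneg x]
end

section
/- Let n ≥ 1 and let k: ℝ × ℝ²ⁿ → ℝ be smooth, with coordinates (t, q₁, …, q_n, p₁, …, p_n). Let x_e ∈ ℝ²ⁿ satisfy D_x k(t, x_e) = 0 for all t ∈ ℝ (so the constant curve x_e is a solution of the Hamilton equations of k). Set H(t,x) := k(t,x) − k(t,x_e) and let M(t) be the 2n×2n matrix with entries (1/2) ∂²H/∂x_i∂x_j(t,x_e). Assume there exist t⁰ ∈ ℝ, λ > 0, c > 0 and r₀ > 0 such that for all t ≥ t⁰: (i) vᵀ M(t) v > λ‖v‖² for all v ∈ ℝ²ⁿ∖{0}; (ii) |D_x^α H(t,x)| ≤ 6c for every multi-index α with |α| = 3 and every x with ‖x − x_e‖ < r₀; and (iii) ∂H/∂t(t,x) ≤ 0 for every x with ‖x − x_e‖ < r₀. Then x_e is stable from t⁰: for every t₀ ≥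 t⁰ and every ε > 0 there exists δ > 0 such that every solution (q,p): [t₀,∞) → ℝ²ⁿ of the Hamilton equations of k with ‖(q,p)(t₀) − x_e‖ < δ satisfies ‖(q,p)(t) − x_e‖ < ε for all t ≥ t₀. -/
open scoped BigOperators
open scoped Topology

/-- The index of the coordinate `q_i` in `ℝ^{2n}` with coordinates `(q, p)`. -/
def qIdx (n : ℕ) (i : Fin n) : Fin (2 * n) :=
  ⟨(i : ℕ), lt_of_lt_of_le i.isLt (by omega)⟩

/-- The index of the coordinate `p_i` in `ℝ^{2n}` with coordinates `(q, p)`. -/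
def pIdx (n : ℕ) (i : Fin n) : Fin (2 * n) :=
  ⟨n + (i : ℕ), lt_of_lt_of_le (Nat.add_lt_add_left i.isLt n) (by omega)⟩

/-- The Hamiltonian vector field of `k : ℝ × ℝ^{2n} → ℝ` in canonical coordinates
`(q₁, …, q_n, p₁, …, p_n)`: `dq_i/dt = ∂k/∂p_i`, `dp_i/dt = −∂k/∂q_i`. -/
noncomputable def hamVF (n : ℕ) (k : ℝ × EuclideanSpace ℝ (Fin (2 * n)) → ℝ)
    (t : ℝ) (x : EuclideanSpace ℝ (Fin (2 * n))) : EuclideanSpace ℝ (Fin (2 * n)) :=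
  (WithLp.equiv 2 (Fin (2 * n) → ℝ)).symm fun i =>
    if h : (i : ℕ) < n then pd (fun y => k (t, y)) x (pIdx n ⟨(i : ℕ), h⟩)
    else - pd (fun y => k (t, y)) x ⟨(i : ℕ) - n, lt_of_le_of_lt (Nat.sub_le _ _) i.isLt⟩

lemma clm_apply_eq_sum {m : ℕ} (L : EuclideanSpace ℝ (Fin m) →L[ℝ] ℝ)
    (w : EuclideanSpace ℝ (Fin m)) :
    L w = ∑ i, w i * L (EuclideanSpace.single i 1) := by
  have hw : (∑ i, w i • EuclideanSpace.single i (1:ℝ)) = w := by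
    ext j; rw [WithLp.ofLp_sum, Finset.sum_apply]; simp [EuclideanSpace.single_apply]
  conv_lhs => rw [← hw]
  rw [map_sum]; simp [smul_eq_mul]

lemma fderiv_apply_eq_sum {m : ℕ} {f : EuclideanSpace ℝ (Fin m) → ℝ}
    {x w : EuclideanSpace ℝ (Fin m)} :
    fderiv ℝ f x w = ∑ i, w i * pd f x i := clm_apply_eq_sum _ w

lemma contDiff_pd {m : ℕ} {f : EuclideanSpace ℝ (Fin m) → ℝ}
    (hf : ContDiff ℝ (⊤ : ℕ∞) f) (j : Fin m) : ContDiff ℝ (⊤ : ℕ∞) (fun y => pd f y j) :=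
  (hf.fderiv_right (by simp)).clm_apply contDiff_const

lemma hasDerivAt_line {m : ℕ} {f : EuclideanSpace ℝ (Fin m) → ℝ}
    (hf : ContDiff ℝ (⊤ : ℕ∞) f) (xe v : EuclideanSpace ℝ (Fin m)) (s : ℝ) :
    HasDerivAt (fun s : ℝ => f (xe + s • v)) (∑ i, v i * pd f (xe + s • v) i) s := by
  have hline : HasDerivAt (fun s : ℝ => xe + s • v) v s := by
    simpa using ((hasDerivAt_id s).smul_const v).const_add xe
  have := (hf.differentiable (by simp) (xe + s • v)).hasFDerivAt.comp_hasDerivAt s hline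
  simp only [fderiv_apply_eq_sum] at this
  exact this

lemma coord_abs_le_norm {m : ℕ} (v : EuclideanSpace ℝ (Fin m)) (i : Fin m) : |v i| ≤ ‖v‖ := by
  rw [EuclideanSpace.norm_eq v]
  have h1 : |v i| = Real.sqrt (‖v i‖^2) := by rw [Real.sqrt_sq_eq_abs]; simp
  rw [h1]
  exact Real.sqrt_le_sqrt (Finset.single_le_sum (f := fun j => ‖v j‖^2)
    (fun j _ => sq_nonneg _) (Finset.mem_univ i))

/-- Taylor-type lower bound. -/
lemma taylor_lower_bound {m : ℕ} {f : EuclideanSpace ℝ (Fin m) → ℝ}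
    (hf : ContDiff ℝ (⊤ : ℕ∞) f) (xe : EuclideanSpace ℝ (Fin m))
    (hf0 : f xe = 0) (hcrit : fderiv ℝ f xe = 0)
    {lam c r0 : ℝ} (hc : 0 ≤ c)
    (hQ : ∀ v : EuclideanSpace ℝ (Fin m), v ≠ 0 →
      2 * lam * ‖v‖ ^ 2 ≤ ∑ j, v j * ∑ i, v i * pd2 f xe i j)
    (h3 : ∀ x : EuclideanSpace ℝ (Fin m), ‖x - xe‖ < r0 → ∀ i j l, |pd3 f x i j l| ≤ 6 * c)
    (x : EuclideanSpace ℝ (Fin m)) (hx : ‖x - xe‖ < r0) :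
    lam * ‖x - xe‖ ^ 2 - 3 * c * (m : ℝ) ^ 3 * ‖x - xe‖ ^ 3 ≤ f x := by
  set v : EuclideanSpace ℝ (Fin m) := x - xe with hv
  by_cases hv0 : v = 0
  · have : x = xe := by rwa [hv, sub_eq_zero] at hv0
    simp [this, hf0, hv0]
  -- the line functions
  set g1 : ℝ → ℝ := fun s => ∑ j, v j * pd f (xe + s • v) j with hg1
  set g2 : ℝ → ℝ := fun s => ∑ j, v j * ∑ i, v i * pd2 f (xe + s • v) i j with hg2
  have hgd : ∀ s : ℝ, HasDerivAt (fun s : ℝ => f (xe + s • v)) (g1 s) s := fun s =>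
    hasDerivAt_line hf xe v s
  have hg1d : ∀ s : ℝ, HasDerivAt g1 (g2 s) s := by
    intro s
    apply HasDerivAt.fun_sum
    intro j _
    exact (hasDerivAt_line (contDiff_pd hf j) xe v s).const_mul (v j)
  have hpd2d : ∀ (j l : Fin m) (s : ℝ),
      HasDerivAt (fun s : ℝ => pd2 f (xe + s • v) j l)
        (∑ i, v i * pd3 f (xe + s • v) i j l) s := fun j l s =>
    hasDerivAt_line (contDiff_pd (contDiff_pd hf l) j) xe v s
  -- membership of the segment in the ball
  have hseg : ∀ s ∈ Set.Icc (0:ℝ) 1, ‖(xe + s • v) - xe‖ < r0 := by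
    intro s hs
    have : ‖(xe + s • v) - xe‖ = |s| * ‖v‖ := by
      rw [add_sub_cancel_left, norm_smul, Real.norm_eq_abs]
    rw [this, abs_of_nonneg hs.1]
    calc s * ‖v‖ ≤ 1 * ‖v‖ := by
          apply mul_le_mul_of_nonneg_right hs.2 (norm_nonneg v)
      _ = ‖v‖ := one_mul _
      _ < r0 := hx
  set S : ℝ := ∑ i, |v i| with hS
  have hS0 : 0 ≤ S := Finset.sum_nonneg fun i _ => abs_nonneg _
  -- Lipschitz bound on pd2 along the segment
  have hlip : ∀ (j l : Fin m), ∀ s ∈ Set.Icc (0:ℝ) 1,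
      |pd2 f (xe + s • v) j l - pd2 f (xe + (0:ℝ) • v) j l| ≤ 6 * c * S := by
    intro j l s hs
    have := Convex.norm_image_sub_le_of_norm_hasDerivWithin_le
      (f := fun s : ℝ => pd2 f (xe + s • v) j l)
      (f' := fun s : ℝ => ∑ i, v i * pd3 f (xe + s • v) i j l)
      (s := Set.Icc (0:ℝ) 1) (C := 6 * c * S)
      (fun u hu => (hpd2d j l u).hasDerivWithinAt)
      (fun u hu => by
        rw [Real.norm_eq_abs]
        calc |∑ i, v i * pd3 f (xe + u • v) i j l| ≤ ∑ i, |v i * pd3 f (xe + u • v) i j l| :=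
              Finset.abs_sum_le_sum_abs _ _
          _ ≤ ∑ i, |v i| * (6 * c) := by
              apply Finset.sum_le_sum
              intro i _
              rw [abs_mul]
              exact mul_le_mul_of_nonneg_left (h3 _ (hseg u hu) i j l) (abs_nonneg _)
          _ = 6 * c * S := by rw [← Finset.sum_mul]; ring)
      (convex_Icc 0 1) (Set.left_mem_Icc.mpr zero_le_one) hs
    calc |pd2 f (xe + s • v) j l - pd2 f (xe + (0:ℝ) • v) j l|
        ≤ 6 * c * S * ‖s - 0‖ := by
          simpa [Real.norm_eq_abs, abs_sub_comm] using this
      _ ≤ 6 * c * S * 1 := by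
          apply mul_le_mul_of_nonneg_left _ (by positivity)
          rw [Real.norm_eq_abs, sub_zero, abs_of_nonneg hs.1]; exact hs.2
      _ = 6 * c * S := mul_one _
  -- lower bound on g2 on [0,1]
  have hg2zero : 2 * lam * ‖v‖ ^ 2 ≤ g2 0 := by
    have := hQ v hv0
    simpa [hg2] using this
  have hg2low : ∀ s ∈ Set.Icc (0:ℝ) 1, 2 * lam * ‖v‖ ^ 2 - 6 * c * S ^ 3 ≤ g2 s := by
    intro s hs
    have hdiff : |g2 s - g2 0| ≤ 6 * c * S ^ 3 := by
      have : g2 s - g2 0 = ∑ j, ∑ i, v j * v i *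
          (pd2 f (xe + s • v) i j - pd2 f (xe + (0:ℝ) • v) i j) := by
        simp only [hg2]
        rw [← Finset.sum_sub_distrib]
        apply Finset.sum_congr rfl
        intro j _
        rw [← mul_sub, ← Finset.sum_sub_distrib, Finset.mul_sum]
        apply Finset.sum_congr rfl
        intro i _
        ring
      rw [this]
      calc |∑ j, ∑ i, v j * v i * (pd2 f (xe + s • v) i j - pd2 f (xe + (0:ℝ) • v) i j)|
          ≤ ∑ j, |∑ i, v j * v i * (pd2 f (xe + s • v) i j - pd2 f (xe + (0:ℝ) • v) i j)| :=
            Finset.abs_sum_le_sum_abs _ _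
        _ ≤ ∑ j, ∑ i, |v j * v i * (pd2 f (xe + s • v) i j - pd2 f (xe + (0:ℝ) • v) i j)| :=
            Finset.sum_le_sum fun j _ => Finset.abs_sum_le_sum_abs _ _
        _ ≤ ∑ j, ∑ i, |v j| * |v i| * (6 * c * S) := by
            apply Finset.sum_le_sum; intro j _
            apply Finset.sum_le_sum; intro i _
            rw [abs_mul, abs_mul]
            exact mul_le_mul_of_nonneg_left (hlip i j s hs) (by positivity)
        _ = 6 * c * S ^ 3 := by
            simp only [← Finset.sum_mul, ← Finset.mul_sum]
            rw [← hS]; ring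
    have h1 := abs_le.mp hdiff
    linarith [hg2zero, h1.1]
  set mm : ℝ := 2 * lam * ‖v‖ ^ 2 - 6 * c * S ^ 3 with hmm
  -- first integration: g1 s ≥ mm * s on [0,1]
  have hg10 : g1 0 = 0 := by
    have : ∀ j, pd f xe j = 0 := by intro j; rw [pd, hcrit]; rfl
    simp [hg1, this]
  have hwd : ∀ s : ℝ, HasDerivAt (fun s => g1 s - mm * s) (g2 s - mm) s := by
    intro s
    exact (hg1d s).sub (by simpa using (hasDerivAt_id s).const_mul mm)
  have hwmono : MonotoneOn (fun s => g1 s - mm * s) (Set.Icc (0:ℝ) 1) := by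
    apply monotoneOn_of_deriv_nonneg (convex_Icc 0 1)
    · exact Continuous.continuousOn (continuous_iff_continuousAt.mpr
        fun s => (hwd s).continuousAt)
    · exact fun s _ => ((hwd s).differentiableAt).differentiableWithinAt
    · intro s hs
      rw [interior_Icc] at hs
      rw [(hwd s).deriv]
      have := hg2low s (Set.mem_Icc.mpr ⟨le_of_lt hs.1, le_of_lt hs.2⟩)
      simp only [hmm]
      linarith
  have hg1low : ∀ s ∈ Set.Icc (0:ℝ) 1, mm * s ≤ g1 s := by
    intro s hs
    have := hwmono (Set.left_mem_Icc.mpr zero_le_one) hs hs.1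
    simp only [mul_zero, sub_zero, hg10] at this
    linarith
  -- second integration
  have hud : ∀ s : ℝ, HasDerivAt (fun s => f (xe + s • v) - mm / 2 * s ^ 2)
      (g1 s - mm * s) s := by
    intro s
    have h2 : HasDerivAt (fun s : ℝ => mm / 2 * s ^ 2) (mm / 2 * (2 * s)) s := by
      simpa using (hasDerivAt_pow 2 s).const_mul (mm / 2)
    have := (hgd s).sub h2
    have e : g1 s - mm * s = g1 s - mm / 2 * (2 * s) := by ring
    rw [e]; exact this
  have humono : MonotoneOn (fun s => f (xe + s • v) - mm / 2 * s ^ 2)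
      (Set.Icc (0:ℝ) 1) := by
    apply monotoneOn_of_deriv_nonneg (convex_Icc 0 1)
    · exact Continuous.continuousOn (continuous_iff_continuousAt.mpr
        fun s => (hud s).continuousAt)
    · exact fun s _ => ((hud s).differentiableAt).differentiableWithinAt
    · intro s hs
      rw [interior_Icc] at hs
      rw [(hud s).deriv]
      have := hg1low s (Set.mem_Icc.mpr ⟨le_of_lt hs.1, le_of_lt hs.2⟩)
      linarith
  have hfinal : f (xe + (0:ℝ) • v) - mm / 2 * (0:ℝ) ^ 2 ≤
      f (xe + (1:ℝ) • v) - mm / 2 * (1:ℝ) ^ 2 :=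
    humono (Set.left_mem_Icc.mpr zero_le_one) (Set.right_mem_Icc.mpr zero_le_one) zero_le_one
  have hx1 : xe + (1:ℝ) • v = x := by rw [one_smul, hv]; abel
  have hx0 : xe + (0:ℝ) • v = xe := by simp
  rw [hx1, hx0, hf0] at hfinal
  have hfx : mm / 2 ≤ f x := by nlinarith [hfinal]
  have hSm : S ≤ (m : ℝ) * ‖v‖ := by
    calc S = ∑ i, |v i| := hS
      _ ≤ ∑ _i : Fin m, ‖v‖ := Finset.sum_le_sum fun i _ => coord_abs_le_norm v i
      _ = (m : ℝ) * ‖v‖ := by simp [mul_comm]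
  have hS3 : S ^ 3 ≤ ((m : ℝ) * ‖v‖) ^ 3 := pow_le_pow_left₀ hS0 hSm 3
  have : 3 * c * S ^ 3 ≤ 3 * c * ((m : ℝ) ^ 3 * ‖v‖ ^ 3) := by
    have := mul_le_mul_of_nonneg_left hS3 (by positivity : (0:ℝ) ≤ 3 * c)
    calc 3 * c * S ^ 3 ≤ 3 * c * ((m:ℝ) * ‖v‖) ^ 3 := this
      _ = 3 * c * ((m : ℝ) ^ 3 * ‖v‖ ^ 3) := by ring
  have hmm2 : mm / 2 = lam * ‖v‖ ^ 2 - 3 * c * S ^ 3 := by rw [hmm]; ring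
  rw [hmm2] at hfx
  have hnorm : ‖x - xe‖ = ‖v‖ := by rw [hv]
  rw [hnorm]
  linarith


lemma hamVF_mul_sum_eq_zero (n : ℕ) (k : ℝ × EuclideanSpace ℝ (Fin (2 * n)) → ℝ)
    (t : ℝ) (x : EuclideanSpace ℝ (Fin (2 * n)))
    (g : Fin (2 * n) → ℝ) (hgk : g = pd (fun y => k (t, y)) x) :
    ∑ i, hamVF n k t x i * g i = 0 := by
  subst hgk
  set g : Fin (2 * n) → ℝ := pd (fun y => k (t, y)) x with hg
  have key : ∀ i : Fin (2 * n), hamVF n k t x i =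
      if h : (i : ℕ) < n then g (pIdx n ⟨(i : ℕ), h⟩)
      else - g ⟨(i : ℕ) - n, lt_of_le_of_lt (Nat.sub_le _ _) i.isLt⟩ := fun i => rfl
  set f : ℕ → ℝ := fun i =>
    if h : i < 2 * n then hamVF n k t x ⟨i, h⟩ * g ⟨i, h⟩ else 0 with hf
  have step1 : ∑ i, hamVF n k t x i * g i = ∑ i ∈ Finset.range (2 * n), f i := by
    rw [← Fin.sum_univ_eq_sum_range]
    exact Finset.sum_congr rfl fun i _ => by simp [hf, i.isLt]
  rw [step1, two_mul, Finset.sum_range_add, ← Finset.sum_add_distrib]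
  apply Finset.sum_eq_zero
  intro i hi
  have hi' : i < n := Finset.mem_range.mp hi
  have h1 : i < 2 * n := by omega
  have h2 : n + i < 2 * n := by omega
  have h3 : ¬ ((n + i : ℕ) < n) := by omega
  have e1 : f i = g (pIdx n ⟨i, hi'⟩) * g ⟨i, h1⟩ := by
    rw [hf]; simp only [dif_pos h1]
    rw [key]; simp only [dif_pos hi']
  have emk : (⟨n + i - n, lt_of_le_of_lt (Nat.sub_le _ _) (h2 : ((⟨n+i, h2⟩ : Fin (2*n)) : ℕ) < 2*n)⟩ : Fin (2 * n)) = ⟨i, h1⟩ := by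
    apply Fin.mk_eq_mk.mpr; omega
  have e2 : f (n + i) = - g ⟨i, h1⟩ * g (pIdx n ⟨i, hi'⟩) := by
    rw [hf]; simp only [dif_pos h2]
    rw [key]; simp only [dif_neg h3]
    rw [emk]
    congr 1
  rw [e1, e2]; ring

variable {E : Type*} [NormedAddCommGroup E] [NormedSpace ℝ E]

lemma hasDerivAt_time_slice {H : ℝ × E → ℝ} (hH : ContDiff ℝ (⊤ : ℕ∞) H) (t : ℝ) (x : E) :
    HasDerivAt (fun s => H (s, x)) (fderiv ℝ H (t, x) (1, 0)) t := by
  have h1 : HasDerivAt (fun s : ℝ => (s, x)) ((1 : ℝ), (0 : E)) t :=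
    (hasDerivAt_id t).prodMk (hasDerivAt_const t x)
  exact (hH.differentiable (by simp) (t, x)).hasFDerivAt.comp_hasDerivAt t h1

lemma fderiv_space_slice {H : ℝ × E → ℝ} (hH : ContDiff ℝ (⊤ : ℕ∞) H) (t : ℝ) (x : E) (w : E) :
    fderiv ℝ (fun y => H (t, y)) x w = fderiv ℝ H (t, x) (0, w) := by
  have h1 : HasFDerivAt (fun y : E => (t, y)) (ContinuousLinearMap.inr ℝ ℝ E) x :=
    (hasFDerivAt_const t x).prodMk (hasFDerivAt_id x)
  have h2 := ((hH.differentiable (by simp) (t, x)).hasFDerivAt.comp x h1).fderiv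
  have h3 : (fun y => H (t, y)) = H ∘ Prod.mk t := rfl
  rw [h3, h2]; rfl

lemma fderiv_prod_split {H : ℝ × E → ℝ} (hH : ContDiff ℝ (⊤ : ℕ∞) H) (t : ℝ) (x : E) (w : E) :
    fderiv ℝ H (t, x) (1, w) =
      deriv (fun s => H (s, x)) t + fderiv ℝ (fun y => H (t, y)) x w := by
  rw [(hasDerivAt_time_slice hH t x).deriv, fderiv_space_slice hH t x w]
  have : ((1 : ℝ), w) = ((1 : ℝ), (0 : E)) + ((0 : ℝ), w) := by simp
  rw [this, map_add]


/-- Coordinate form of Theorem 8.3: stability from `t⁰` of an equilibrium point `x_e` of the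
Hamilton equations of `k`, under a uniformly positive-definite Hessian, uniformly bounded
third space-derivatives, and non-positive time derivative of `H(t,x) = k(t,x) − k(t,x_e)`. -/
theorem stability_of_equilibrium
    (n : ℕ) (hn : 1 ≤ n)
    (k : ℝ × EuclideanSpace ℝ (Fin (2 * n)) → ℝ) (hk : ContDiff ℝ (⊤ : ℕ∞) k)
    (xe : EuclideanSpace ℝ (Fin (2 * n)))
    (hcrit : ∀ t : ℝ, fderiv ℝ (fun x => k (t, x)) xe = 0)
    (H : ℝ × EuclideanSpace ℝ (Fin (2 * n)) → ℝ)
    (hHdef : ∀ t x, H (t, x) = k (t, x) - k (t, xe))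
    (M : ℝ → Matrix (Fin (2 * n)) (Fin (2 * n)) ℝ)
    (hM : ∀ t i j, M t i j = (1 / 2) * pd2 (fun x => H (t, x)) xe i j)
    (t0 lam c r0 : ℝ) (hlam : 0 < lam) (hc : 0 < c) (hr0 : 0 < r0)
    (hlow : ∀ t ≥ t0, ∀ v : EuclideanSpace ℝ (Fin (2 * n)), v ≠ 0 →
      lam * ‖v‖ ^ 2 < ∑ i, ∑ j, v i * M t i j * v j)
    (h3 : ∀ t ≥ t0, ∀ x : EuclideanSpace ℝ (Fin (2 * n)), ‖x - xe‖ < r0 → ∀ i j l,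
      |pd3 (fun y => H (t, y)) x i j l| ≤ 6 * c)
    (hdec : ∀ t ≥ t0, ∀ x : EuclideanSpace ℝ (Fin (2 * n)), ‖x - xe‖ < r0 →
      deriv (fun s => H (s, x)) t ≤ 0) :
    ∀ t1 ≥ t0, ∀ ε > 0, ∃ δ > 0,
      ∀ γ : ℝ → EuclideanSpace ℝ (Fin (2 * n)),
        (∀ t ∈ Set.Ici t1, HasDerivWithinAt γ (hamVF n k t (γ t)) (Set.Ici t1) t) →
        ‖γ t1 - xe‖ < δ → ∀ t ≥ t1, ‖γ t - xe‖ < ε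

    := by
  intro t1 ht1 eps heps
  have hHfun : H = fun p => k p - k (p.1, xe) := by
    funext p; obtain ⟨a, b⟩ := p; exact hHdef a b
  have hHsmooth : ContDiff ℝ (⊤ : ℕ∞) H := by
    rw [hHfun]
    exact hk.sub (hk.comp (contDiff_fst.prodMk contDiff_const))
  have hslice : ∀ t : ℝ, ContDiff ℝ (⊤ : ℕ∞) (fun y => H (t, y)) := fun t =>
    hHsmooth.comp (contDiff_const.prodMk contDiff_id)
  have hslice_eq : ∀ t : ℝ, (fun y => H (t, y)) = fun y => k (t, y) - k (t, xe) := by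
    intro t; funext y; exact hHdef t y
  have hfcrit : ∀ t : ℝ, fderiv ℝ (fun y => H (t, y)) xe = 0 := by
    intro t; rw [hslice_eq t, fderiv_sub_const, hcrit t]
  have hpdHk : ∀ (t : ℝ) (x : EuclideanSpace ℝ (Fin (2 * n))) (i : Fin (2 * n)),
      pd (fun y => H (t, y)) x i = pd (fun y => k (t, y)) x i := by
    intro t x i; rw [pd, pd, hslice_eq t, fderiv_sub_const]
  have hf0 : ∀ t : ℝ, H (t, xe) = 0 := fun t => by rw [hHdef]; ring
  -- positive definiteness of the Hessian in the needed form
  have hQ : ∀ t ≥ t0, ∀ v : EuclideanSpace ℝ (Fin (2 * n)), v ≠ 0 →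
      2 * lam * ‖v‖ ^ 2 ≤ ∑ j, v j * ∑ i, v i * pd2 (fun y => H (t, y)) xe i j := by
    intro t ht v hv
    have h1 := hlow t ht v hv
    have h2 : ∑ j, v j * ∑ i, v i * pd2 (fun y => H (t, y)) xe i j
        = 2 * ∑ i, ∑ j, v i * M t i j * v j := by
      calc ∑ j, v j * ∑ i, v i * pd2 (fun y => H (t, y)) xe i j
          = ∑ j, ∑ i, 2 * (v i * M t i j * v j) := by
            apply Finset.sum_congr rfl; intro j _
            rw [Finset.mul_sum]
            apply Finset.sum_congr rfl; intro i _
            rw [hM t i j]; ring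
        _ = 2 * ∑ i, ∑ j, v i * M t i j * v j := by
            rw [Finset.sum_comm]
            simp [Finset.mul_sum]
    rw [h2]
    linarith
  -- constants
  have h2n : (0:ℝ) < ((2 * n : ℕ) : ℝ) := by
    have : 0 < 2 * n := by omega
    exact_mod_cast this
  have hKpos : 0 < 3 * c * ((2 * n : ℕ) : ℝ) ^ 3 := by
    have := pow_pos h2n 3
    nlinarith
  have hr1 : 0 < lam / (2 * (3 * c * ((2 * n : ℕ) : ℝ) ^ 3)) := div_pos hlam (by linarith)
  set r1 : ℝ := lam / (2 * (3 * c * ((2 * n : ℕ) : ℝ) ^ 3)) with hr1def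
  set rho : ℝ := min eps (min r0 r1) / 2 with hrho
  have hmin1 : min eps (min r0 r1) ≤ eps := min_le_left _ _
  have hmin2 : min eps (min r0 r1) ≤ r0 := le_trans (min_le_right _ _) (min_le_left _ _)
  have hmin3 : min eps (min r0 r1) ≤ r1 := le_trans (min_le_right _ _) (min_le_right _ _)
  have hminpos : 0 < min eps (min r0 r1) := lt_min heps (lt_min hr0 hr1)
  have hrhopos : 0 < rho := by rw [hrho]; linarith
  have hrhoe : rho < eps := by rw [hrho]; linarith
  have hrhor0 : rho < r0 := by rw [hrho]; linarith
  have hrhor1 : rho ≤ r1 := by rw [hrho]; linarith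
  -- lower bound for H in the ball of radius rho
  have hlower : ∀ t ≥ t0, ∀ x : EuclideanSpace ℝ (Fin (2 * n)), ‖x - xe‖ ≤ rho →
      lam / 2 * ‖x - xe‖ ^ 2 ≤ H (t, x) := by
    intro t ht x hxrho
    have hxr0 : ‖x - xe‖ < r0 := lt_of_le_of_lt hxrho hrhor0
    have htb := taylor_lower_bound (hslice t) xe (hf0 t) (hfcrit t) (le_of_lt hc)
      (hQ t ht) (h3 t ht) x hxr0
    have hvle : ‖x - xe‖ ≤ r1 := le_trans hxrho hrhor1
    have hvle' : ‖x - xe‖ ≤ lam / (2 * (3 * c * ((2 * n : ℕ) : ℝ) ^ 3)) := by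
      rw [← hr1def]; exact hvle
    have h7 : ‖x - xe‖ ^ 3 ≤ lam / (2 * (3 * c * ((2 * n : ℕ) : ℝ) ^ 3)) * ‖x - xe‖ ^ 2 := by
      nlinarith [mul_nonneg (sub_nonneg.2 hvle') (sq_nonneg ‖x - xe‖), sq_nonneg ‖x - xe‖,
        norm_nonneg (x - xe)]
    have h8 : (3 * c * ((2 * n : ℕ) : ℝ) ^ 3) *
        (lam / (2 * (3 * c * ((2 * n : ℕ) : ℝ) ^ 3))) = lam / 2 := by
      field_simp
    have h9 : (3 * c * ((2 * n : ℕ) : ℝ) ^ 3) * ‖x - xe‖ ^ 3 ≤ lam / 2 * ‖x - xe‖ ^ 2 := by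
      have := mul_le_mul_of_nonneg_left h7 (le_of_lt hKpos)
      calc (3 * c * ((2 * n : ℕ) : ℝ) ^ 3) * ‖x - xe‖ ^ 3
          ≤ (3 * c * ((2 * n : ℕ) : ℝ) ^ 3) *
            (lam / (2 * (3 * c * ((2 * n : ℕ) : ℝ) ^ 3)) * ‖x - xe‖ ^ 2) := this
        _ = lam / 2 * ‖x - xe‖ ^ 2 := by rw [← mul_assoc, h8]
    nlinarith [htb]
  -- choice of delta by continuity at time t1
  have hcont1 : ContinuousAt (fun x => H (t1, x)) xe :=
    ((hslice t1).continuous).continuousAt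
  obtain ⟨dlt, hdltpos, hball⟩ := Metric.continuousAt_iff.mp hcont1 (lam / 2 * rho ^ 2)
    (by positivity)
  refine ⟨min dlt rho, lt_min hdltpos hrhopos, ?_⟩
  intro γ hγ hinit
  have hγcont : ContinuousOn γ (Set.Ici t1) := fun s hs => (hγ s hs).continuousWithinAt
  have hFcont : ContinuousOn (fun t => ‖γ t - xe‖) (Set.Ici t1) :=
    (hγcont.sub continuousOn_const).norm
  have hinitrho : ‖γ t1 - xe‖ < rho := lt_of_lt_of_le hinit (min_le_right _ _)
  -- main claim
  have key : ∀ t ≥ t1, ‖γ t - xe‖ < rho := by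
    by_contra hcon
    push_neg at hcon
    obtain ⟨t2, ht2, ht2rho⟩ := hcon
    set Sset : Set ℝ := {t : ℝ | t1 ≤ t ∧ rho ≤ ‖γ t - xe‖} with hSset
    have hne : Sset.Nonempty := ⟨t2, ht2, ht2rho⟩
    have hbdd : BddBelow Sset := ⟨t1, fun s hs => hs.1⟩
    have hclosed : IsClosed Sset := by
      have heq : Sset = Set.Ici t1 ∩ (fun t => ‖γ t - xe‖) ⁻¹' Set.Ici rho := by
        ext s; simp [hSset, Set.mem_setOf_eq]
      rw [heq]
      exact hFcont.preimage_isClosed_of_isClosed isClosed_Ici isClosed_Ici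
    set τ : ℝ := sInf Sset with hτdef
    have hτS : τ ∈ Sset := hclosed.csInf_mem hne hbdd
    have hτ1 : t1 ≤ τ := hτS.1
    have hτrho : rho ≤ ‖γ τ - xe‖ := hτS.2
    have hτgt : t1 < τ := by
      rcases lt_or_eq_of_le hτ1 with h | h
      · exact h
      · exfalso; rw [← h] at hτrho; linarith
    have hbefore : ∀ s, t1 ≤ s → s < τ → ‖γ s - xe‖ < rho := by
      intro s hs1 hsτ
      by_contra hge
      push_neg at hge
      have hmem : s ∈ Sset := ⟨hs1, hge⟩
      have := csInf_le hbdd hmem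
      rw [← hτdef] at this
      linarith
    have hτle : ‖γ τ - xe‖ ≤ rho := by
      have hnb : (𝓝[Set.Ioo t1 τ] τ).NeBot := right_nhdsWithin_Ioo_neBot hτgt
      have hwc : Filter.Tendsto (fun t => ‖γ t - xe‖) (𝓝[Set.Ioo t1 τ] τ)
          (𝓝 ‖γ τ - xe‖) :=
        ((hFcont τ hτ1).mono (fun s hs => le_of_lt hs.1)).tendsto
      refine le_of_tendsto hwc ?_
      filter_upwards [self_mem_nhdsWithin] with s hs
      exact le_of_lt (hbefore s (le_of_lt hs.1) hs.2)
    have hIccrho : ∀ s ∈ Set.Icc t1 τ, ‖γ s - xe‖ ≤ rho := by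
      intro s hs
      rcases lt_or_eq_of_le hs.2 with h | h
      · exact le_of_lt (hbefore s hs.1 h)
      · rw [h]; exact hτle
    -- the Lyapunov function decreases
    set φ : ℝ → ℝ := fun t => H (t, γ t) with hφ
    have hφd : ∀ s ∈ Set.Ioo t1 τ, HasDerivAt φ (deriv (fun u => H (u, γ s)) s) s := by
      intro s hs
      have hsI : s ∈ Set.Ici t1 := le_of_lt hs.1
      have h1 : HasDerivWithinAt (fun u => (u, γ u)) ((1:ℝ), hamVF n k s (γ s))
          (Set.Ici t1) s := (hasDerivWithinAt_id s _).prodMk (hγ s hsI)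
      have h2 : HasDerivWithinAt φ (fderiv ℝ H (s, γ s) (1, hamVF n k s (γ s)))
          (Set.Ici t1) s :=
        (hHsmooth.differentiable (by simp) (s, γ s)).hasFDerivAt.comp_hasDerivWithinAt s h1
      have h3' : HasDerivAt φ (fderiv ℝ H (s, γ s) (1, hamVF n k s (γ s))) s :=
        h2.hasDerivAt (Ici_mem_nhds hs.1)
      have h4 : fderiv ℝ H (s, γ s) (1, hamVF n k s (γ s)) =
          deriv (fun u => H (u, γ s)) s := by
        rw [fderiv_prod_split hHsmooth]
        have h5 : fderiv ℝ (fun y => H (s, y)) (γ s) (hamVF n k s (γ s)) = 0 := by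
          rw [fderiv_apply_eq_sum]
          calc ∑ i, hamVF n k s (γ s) i * pd (fun y => H (s, y)) (γ s) i
              = ∑ i, hamVF n k s (γ s) i * pd (fun y => k (s, y)) (γ s) i := by
                apply Finset.sum_congr rfl; intro i _; rw [hpdHk s (γ s) i]
            _ = 0 := hamVF_mul_sum_eq_zero n k s (γ s) _ rfl
        rw [h5, add_zero]
      rw [h4] at h3'
      exact h3'
    have hφanti : AntitoneOn φ (Set.Icc t1 τ) := by
      apply antitoneOn_of_deriv_nonpos (convex_Icc _ _)
      · have hpc : ContinuousOn (fun u => (u, γ u)) (Set.Icc t1 τ) :=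
          continuousOn_id.prodMk (hγcont.mono Set.Icc_subset_Ici_self)
        exact hHsmooth.continuous.comp_continuousOn hpc
      · intro s hs
        rw [interior_Icc] at hs
        exact ((hφd s hs).differentiableAt).differentiableWithinAt
      · intro s hs
        rw [interior_Icc] at hs
        rw [(hφd s hs).deriv]
        exact hdec s (le_trans ht1 (le_of_lt hs.1)) (γ s)
          (lt_of_le_of_lt (hIccrho s ⟨le_of_lt hs.1, le_of_lt hs.2⟩) hrhor0)
    have hτeq : ‖γ τ - xe‖ = rho := le_antisymm hτle hτrho
    have hφτ : lam / 2 * rho ^ 2 ≤ φ τ := by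
      have := hlower τ (le_trans ht1 hτ1) (γ τ) hτle
      rw [hτeq] at this
      exact this
    have hφt1 : φ t1 < lam / 2 * rho ^ 2 := by
      have hd : dist (γ t1) xe < dlt := by
        rw [dist_eq_norm]
        exact lt_of_lt_of_le hinit (min_le_left _ _)
      have hb := hball hd
      rw [Real.dist_eq, hf0 t1, sub_zero] at hb
      exact lt_of_le_of_lt (le_abs_self _) hb
    have hmono := hφanti (Set.left_mem_Icc.mpr hτ1) (Set.right_mem_Icc.mpr hτ1) hτ1
    linarith
  intro t ht
  exact lt_trans (key t ht) hrhoe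
end

section
/- Fix real numbers b, B₀, B₁, B₂, B₃, ξ. Let Ĥ := b(B₀·I + B₁Ŝ₁ + B₂Ŝ₂ + B₃Ŝ₃) ∈ Mat_{2×2}(ℂ) and define h_ξ: ℝ⁴ → ℝ by h_ξ := b(B₀h₀ + B₁h₁ + B₂h₂ + B₃h₃) − ξ·h₀. Then for every (q₁,p₁,q₂,p₂) ∈ ℝ⁴, the real Fréchet derivative of h_ξ at (q₁,p₁,q₂,p₂) is zero if and only if Ĥ·(q₁+ip₁, q₂+ip₂)ᵀ = ξ·(q₁+ip₁, q₂+ip₂)ᵀ, i.e. the point is a critical point of h_ξ exactly when the associated complex vector is an eigenvector of Ĥ with eigenvalue ξ (or is zero). -/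
open Complex Matrix

/-- The first Pauli matrix. -/
noncomputable def pauli1 : Matrix (Fin 2) (Fin 2) ℂ := !![0, 1; 1, 0]

/-- The second Pauli matrix. -/
noncomputable def pauli2 : Matrix (Fin 2) (Fin 2) ℂ := !![0, -I; I, 0]

/-- The third Pauli matrix. -/
noncomputable def pauli3 : Matrix (Fin 2) (Fin 2) ℂ := !![1, 0; 0, -1]

/-- Derivative at `0` of a real quadratic polynomial is its linear coefficient. -/
lemma twolevel_quad_deriv (a c0 c1 : ℝ) :
    HasDerivAt (fun t : ℝ => c0 + c1 * t + a * t ^ 2) c1 0 := by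
  have h1 : HasDerivAt (fun t : ℝ => c0 + c1 * t + a * t ^ 2)
      (c1 * 1 + a * (2 * 0 ^ 1)) 0 :=
    (((hasDerivAt_id (0:ℝ)).const_mul c1).const_add c0).add
      ((hasDerivAt_pow 2 (0:ℝ)).const_mul a)
  simpa using h1

/-- Section 10 of the paper: for the two-level quantum system with Hamiltonian operator
`Ĥ = b(B₀ I + B₁ Ŝ₁ + B₂ Ŝ₂ + B₃ Ŝ₃)` (where `Ŝⱼ = σⱼ/2`), a point `(q₁,p₁,q₂,p₂) ∈ ℝ⁴`
is a critical point of `h_ξ = b(B₀h₀ + B₁h₁ + B₂h₂ + B₃h₃) − ξ h₀` if and only if the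
complex vector `(q₁+ip₁, q₂+ip₂)` satisfies `Ĥ ψ = ξ ψ`, i.e. it is an eigenvector of `Ĥ`
with eigenvalue `ξ` (or is zero). -/
theorem twolevel_critical_iff_eigenvector
    (b B0 B1 B2 B3 ξ : ℝ)
    (Hop : Matrix (Fin 2) (Fin 2) ℂ)
    (hHop : Hop = (b : ℂ) • ((B0 : ℂ) • (1 : Matrix (Fin 2) (Fin 2) ℂ)
      + (B1 : ℂ) • ((1 / 2 : ℂ) • pauli1)
      + (B2 : ℂ) • ((1 / 2 : ℂ) • pauli2)
      + (B3 : ℂ) • ((1 / 2 : ℂ) • pauli3)))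
    (hxi : ℝ × ℝ × ℝ × ℝ → ℝ)
    (hdef : ∀ q1 p1 q2 p2 : ℝ, hxi (q1, p1, q2, p2) =
      b * (B0 * ((q1 ^ 2 + p1 ^ 2 + q2 ^ 2 + p2 ^ 2) / 2)
        + B1 * ((p1 * p2 + q1 * q2) / 2)
        + B2 * ((q1 * p2 - q2 * p1) / 2)
        + B3 * ((p1 ^ 2 + q1 ^ 2 - p2 ^ 2 - q2 ^ 2) / 4))
      - ξ * ((q1 ^ 2 + p1 ^ 2 + q2 ^ 2 + p2 ^ 2) / 2)) :
    ∀ q1 p1 q2 p2 : ℝ,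
      fderiv ℝ hxi (q1, p1, q2, p2) = 0 ↔
      Hop.mulVec ![(q1 : ℂ) + p1 * I, (q2 : ℂ) + p2 * I]
        = (ξ : ℂ) • ![(q1 : ℂ) + p1 * I, (q2 : ℂ) + p2 * I] := by
  intro q1 p1 q2 p2
  have hxi_eq : hxi = fun v : ℝ × ℝ × ℝ × ℝ =>
      b * (B0 * ((v.1 ^ 2 + v.2.1 ^ 2 + v.2.2.1 ^ 2 + v.2.2.2 ^ 2) / 2)
        + B1 * ((v.2.1 * v.2.2.2 + v.1 * v.2.2.1) / 2)
        + B2 * ((v.1 * v.2.2.2 - v.2.2.1 * v.2.1) / 2)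
        + B3 * ((v.2.1 ^ 2 + v.1 ^ 2 - v.2.2.2 ^ 2 - v.2.2.1 ^ 2) / 4))
      - ξ * ((v.1 ^ 2 + v.2.1 ^ 2 + v.2.2.1 ^ 2 + v.2.2.2 ^ 2) / 2) := by
    funext v
    obtain ⟨a, c, d, e⟩ := v
    exact hdef a c d e
  have hdiff : DifferentiableAt ℝ hxi (q1, p1, q2, p2) := by
    rw [hxi_eq]; fun_prop
  -- the four partial derivatives
  set g1 := b * (B0 * q1 + B1 * q2 / 2 + B2 * p2 / 2 + B3 * q1 / 2) - ξ * q1 with hg1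
  set g2 := b * (B0 * p1 + B1 * p2 / 2 - B2 * q2 / 2 + B3 * p1 / 2) - ξ * p1 with hg2
  set g3 := b * (B0 * q2 + B1 * q1 / 2 - B2 * p1 / 2 - B3 * q2 / 2) - ξ * q2 with hg3
  set g4 := b * (B0 * p2 + B1 * p1 / 2 + B2 * q1 / 2 - B3 * p2 / 2) - ξ * p2 with hg4
  have key : ∀ v1 v2 v3 v4 : ℝ, fderiv ℝ hxi (q1, p1, q2, p2) (v1, v2, v3, v4)
      = g1 * v1 + g2 * v2 + g3 * v3 + g4 * v4 := by
    intro v1 v2 v3 v4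
    set x : ℝ × ℝ × ℝ × ℝ := (q1, p1, q2, p2) with hx
    set v : ℝ × ℝ × ℝ × ℝ := (v1, v2, v3, v4) with hv
    have hgl : HasDerivAt (fun t : ℝ => x + t • v) v 0 := by
      simpa using ((hasDerivAt_id (0:ℝ)).smul_const v).const_add x
    have hf' : HasFDerivAt hxi (fderiv ℝ hxi x) (x + (0:ℝ) • v) := by
      simpa using hdiff.hasFDerivAt
    have hcomp := hf'.comp_hasDerivAt 0 hgl
    have heq : (fun t : ℝ => hxi (x + t • v)) = fun t : ℝ =>
        hxi x + (g1 * v1 + g2 * v2 + g3 * v3 + g4 * v4) * t + hxi v * t ^ 2 := by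
      funext t
      have hxv : x + t • v = (q1 + t * v1, p1 + t * v2, q2 + t * v3, p2 + t * v4) := by
        simp [hx, hv, Prod.ext_iff, mul_comm]
      rw [hxv, hdef, hx, hv, hdef, hdef, hg1, hg2, hg3, hg4]
      ring
    have hpoly : HasDerivAt (fun t : ℝ => hxi (x + t • v))
        (g1 * v1 + g2 * v2 + g3 * v3 + g4 * v4) 0 := by
      rw [heq]; exact twolevel_quad_deriv _ _ _
    exact hcomp.unique hpoly
  have hgrad : fderiv ℝ hxi (q1, p1, q2, p2) = 0 ↔
      (g1 = 0 ∧ g2 = 0 ∧ g3 = 0 ∧ g4 = 0) := by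
    constructor
    · intro h0
      have e1 := key 1 0 0 0
      have e2 := key 0 1 0 0
      have e3 := key 0 0 1 0
      have e4 := key 0 0 0 1
      rw [h0] at e1 e2 e3 e4
      simp at e1 e2 e3 e4
      exact ⟨e1.symm, e2.symm, e3.symm, e4.symm⟩
    · rintro ⟨h1, h2, h3, h4⟩
      apply ContinuousLinearMap.ext
      rintro ⟨v1, v2, v3, v4⟩
      rw [key, h1, h2, h3, h4]
      simp
  rw [hgrad, hHop]
  simp only [pauli1, pauli2, pauli3, funext_iff, Fin.forall_fin_two, Matrix.mulVec,
    dotProduct, Fin.sum_univ_two, Complex.ext_iff, Matrix.smul_apply, Matrix.add_apply,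
    Matrix.one_apply, Matrix.cons_val_zero, Matrix.cons_val_one, Matrix.head_cons,
    Matrix.cons_val', Matrix.empty_val', Matrix.cons_val_fin_one, Matrix.head_fin_const,
    Pi.smul_apply, smul_eq_mul, Matrix.of_apply]
  norm_num
  rw [hg1, hg2, hg3, hg4]
  constructor
  · rintro ⟨h1, h2, h3, h4⟩
    exact ⟨⟨by linear_combination h1, by linear_combination h2⟩,
      by linear_combination h3, by linear_combination h4⟩
  · rintro ⟨⟨h1, h2⟩, h3, h4⟩
    exact ⟨by linear_combination h1, by linear_combination h2,
      by linear_combination h3, by linear_combination h4⟩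
end

section
/- Let V be a real vector space of finite odd dimension, ω an alternating bilinear form on V, and η a linear functional on V. Define the linear map ♭: V → V* by ♭(v) := ω(v, ·) + η(v)·η, and define the alternating bilinear form ω̂ on ℝ × V by ω̂((s, v), (s', v')) := ω(v, v') + s·η(v') − s'·η(v). Then ♭ is bijective if and only if ω̂ is nondegenerate. -/
/-!
An alternating form on an odd-dimensional space is degenerate, so when `♭` is injective the
radical of `ω` contains a Reeb vector `e` (`ω e = 0`, `η e = 1`, hence `♭ e = η`). A kernel vector
`(s, v)` of `ω̂` has `η v = 0` and `♭ v = -s η = ♭ (-s • e)`, so `v = -s • e` and then `s = 0`.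
Conversely, `♭ v = 0` gives `η v ^ 2 = ♭ v v = 0`, which puts `(0, v)` in the kernel of `ω̂`;
and an injective `♭ : V → V*` is bijective by counting dimensions.
-/

open Module

theorem Matrix.det_eq_zero_of_transpose_eq_neg {n R : Type*} [DecidableEq n] [Fintype n]
    [CommRing R] [IsAddTorsionFree R] {M : Matrix n n R} (hM : M.transpose = -M)
    (hodd : Odd (Fintype.card n)) : M.det = 0 :=
  self_eq_neg.mp <| calc
    M.det = (-M).det := by rw [← hM, det_transpose]
    _ = -M.det := by rw [det_neg, hodd.neg_one_pow, neg_one_mul]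

theorem LinearMap.IsAlt.not_separatingLeft_of_odd_finrank {K V : Type*} [Field K]
    [IsAddTorsionFree K] [AddCommGroup V] [Module K V] [FiniteDimensional K V]
    {ω : V →ₗ[K] V →ₗ[K] K} (hω : ω.IsAlt) (hodd : Odd (finrank K V)) :
    ¬ ω.SeparatingLeft := by
  let b := finBasis K V
  have hskew : (BilinForm.toMatrix b ω).transpose = -BilinForm.toMatrix b ω := by
    ext i j
    exact (hω.neg _ _).symm
  rw [← BilinForm.separatingLeft_toMatrix_iff b, Matrix.separatingLeft_iff_det_ne_zero, not_not]
  exact Matrix.det_eq_zero_of_transpose_eq_neg hskew (by rwa [Fintype.card_fin])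

section Cosymplectic

variable {K V : Type*} [Field K] [AddCommGroup V] [Module K V]
  {ω : V →ₗ[K] V →ₗ[K] K} {η : V →ₗ[K] K} {flat : V →ₗ[K] V →ₗ[K] K}

theorem eta_eq_zero_of_flat_eq_zero (halt : ω.IsAlt) (hflat : ∀ v w, flat v w = ω v w + η v * η w)
    {v : V} (hv : flat v = 0) : η v = 0 := by
  have h := hflat v v
  rw [hv, halt v, zero_add, LinearMap.zero_apply] at h
  exact mul_self_eq_zero.mp h.symm

theorem exists_reeb_vector [IsAddTorsionFree K] [FiniteDimensional K V]
    (hodd : Odd (finrank K V)) (halt : ω.IsAlt) (hflat : ∀ v w, flat v w = ω v w + η v * η w)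
    (hinj : Function.Injective flat) : ∃ e, ω e = 0 ∧ η e = 1 := by
  obtain ⟨v, hv, hv_ne⟩ : ∃ v, (∀ w, ω v w = 0) ∧ v ≠ 0 := by
    simpa [LinearMap.SeparatingLeft] using halt.not_separatingLeft_of_odd_finrank hodd
  have hηv : η v ≠ 0 := by
    refine fun h ↦ hv_ne (hinj ?_)
    ext w
    simp [hflat, hv, h]
  refine ⟨(η v)⁻¹ • v, ?_, by simp [hηv]⟩
  ext w
  simp [hv]

theorem flat_injective_of_nondegenerate (halt : ω.IsAlt)
    (hflat : ∀ v w, flat v w = ω v w + η v * η w) {Ω : K × V → K × V → K}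
    (hΩ : ∀ s s' v v', Ω (s, v) (s', v') = ω v v' + s * η v' - s' * η v)
    (hΩnd : ∀ z, (∀ z', Ω z z' = 0) → z = 0) : Function.Injective flat := by
  refine (injective_iff_map_eq_zero flat).mpr fun v hv ↦ ?_
  have hηv := eta_eq_zero_of_flat_eq_zero halt hflat hv
  have hωv : ∀ w, ω v w = 0 := fun w ↦ by
    simpa [hflat, hηv] using LinearMap.congr_fun hv w
  refine congrArg Prod.snd (hΩnd (0, v) fun ⟨s', v'⟩ ↦ ?_)
  simp [hΩ, hωv, hηv]

theorem nondegenerate_of_flat_injective (hflat : ∀ v w, flat v w = ω v w + η v * η w)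
    {Ω : K × V → K × V → K} (hΩ : ∀ s s' v v', Ω (s, v) (s', v') = ω v v' + s * η v' - s' * η v)
    {e : V} (hωe : ω e = 0) (hηe : η e = 1) (hinj : Function.Injective flat) :
    ∀ z, (∀ z', Ω z z' = 0) → z = 0 := by
  rintro ⟨s, v⟩ hz
  have hηv : η v = 0 := by simpa [hΩ] using hz (1, 0)
  have hv : v = (-s) • e := hinj <| by
    ext w
    have h := hz (0, w)
    simp only [hΩ, zero_mul, sub_zero] at h
    simp only [hflat, hωe, hηe, hηv, map_smul, LinearMap.smul_apply, LinearMap.zero_apply,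
      smul_eq_mul]
    linear_combination h
  have hs : s = 0 := by simpa [hηv, hηe] using congrArg η hv
  simp [hs, hv]

end Cosymplectic

/-- Pointwise content of Lemma 2.1 of the paper: for an odd-(finite-)dimensional real vector
space `V`, an alternating bilinear form `ω` and a linear functional `η` on `V`, the map
`♭(v) = ω(v, ·) + η(v)·η` is bijective if and only if the alternating bilinear form
`ω̂((s, v), (s', v')) = ω(v, v') + s·η(v') − s'·η(v)` on `ℝ × V` is nondegenerate. -/
theorem cosymplectic_iff_symplectic_on_prod
    (V : Type*) [AddCommGroup V] [Module ℝ V] [FiniteDimensional ℝ V]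
    (hodd : Odd (Module.finrank ℝ V))
    (ω : V →ₗ[ℝ] V →ₗ[ℝ] ℝ) (halt : ∀ v : V, ω v v = 0)
    (η : V →ₗ[ℝ] ℝ)
    (flat : V →ₗ[ℝ] (V →ₗ[ℝ] ℝ))
    (hflat : ∀ v w : V, flat v w = ω v w + η v * η w)
    (Ω : ℝ × V → ℝ × V → ℝ)
    (hΩ : ∀ (s s' : ℝ) (v v' : V), Ω (s, v) (s', v') = ω v v' + s * η v' - s' * η v) :
    Function.Bijective flat ↔ ∀ z : ℝ × V, (∀ z' : ℝ × V, Ω z z' = 0) → z = 0 := by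
  have hbij : Function.Bijective flat ↔ Function.Injective flat :=
    ⟨(·.injective), fun hinj ↦ ⟨hinj,
      (LinearMap.injective_iff_surjective_of_finrank_eq_finrank
        Subspace.dual_finrank_eq.symm).mp hinj⟩⟩
  rw [hbij]
  refine ⟨fun hinj ↦ ?_, flat_injective_of_nondegenerate halt hflat hΩ⟩
  obtain ⟨e, hωe, hηe⟩ := exists_reeb_vector hodd halt hflat hinj
  exact nondegenerate_of_flat_injective hflat hΩ hωe hηe hinj
end
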